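/- arXiv:0711.2338 — 2 statements merged into one kernel-verified Lean document; each statement's English description precedes it below -/
import Mathlib

section
/- Suppose functions V, H, K of λ satisfy VH' + HV' = −KH (the third equation of system (5.4)), and λ(μ) satisfies dλ/dμ = V(λ(μ)) with K(λ(μ)) = −tan(μ). Then the quantity H(λ(μ))·V(λ(μ))·cos(μ) is constant in μ. -/
/-! Along the curve, `P = H V` satisfies `d/dμ P(λ(μ)) = P'(λ) V(λ) = -K(λ) H(λ) V(λ) = tan μ · P(λ(μ))`,
so `cos μ` is an integrating factor: `(P(λ(μ)) cos μ)' = tan μ · P cos μ - P sin μ = 0`. -/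

open Real Set

theorem hasDerivAt_mul_cos_of_hasDerivAt_tan_mul {p : ℝ → ℝ} {μ : ℝ}
    (hp : HasDerivAt p (tan μ * p μ) μ) (hcos : cos μ ≠ 0) :
    HasDerivAt (fun t => p t * cos t) 0 μ := by
  have htan : tan μ * cos μ = sin μ := by rw [tan_eq_sin_div_cos]; field_simp
  exact (hp.mul (hasDerivAt_cos μ)).congr_deriv (by linear_combination p μ * htan)

theorem exists_eq_const_on_Ioo_of_hasDerivAt_zero {f : ℝ → ℝ} {a b : ℝ}
    (hf : ∀ x ∈ Ioo a b, HasDerivAt f 0 x) : ∃ m, ∀ x ∈ Ioo a b, f x = m :=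
  isOpen_Ioo.exists_is_const_of_deriv_eq_zero isPreconnected_Ioo
    (fun x hx => (hf x hx).differentiableAt.differentiableWithinAt)
    (fun x hx => (hf x hx).deriv)

/-- First integral (5.8): if `V H' + H V' = -K H` and `λ' (μ) = V(λ(μ))` with
`K(λ(μ)) = -tan μ` on an interval where `cos μ ≠ 0`, then `H(λ(μ)) V(λ(μ)) cos μ`
is constant in `μ`. -/
theorem stmt12 (V H K lam : ℝ → ℝ) (a b : ℝ)
    (hV : Differentiable ℝ V) (hH : Differentiable ℝ H)
    (heq : ∀ x : ℝ, V x * deriv H x + H x * deriv V x = -(K x * H x))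
    (hlam : ∀ μ ∈ Set.Ioo a b, HasDerivAt lam (V (lam μ)) μ)
    (hK : ∀ μ ∈ Set.Ioo a b, K (lam μ) = -Real.tan μ)
    (hcos : ∀ μ ∈ Set.Ioo a b, Real.cos μ ≠ 0) :
    ∃ m : ℝ, ∀ μ ∈ Set.Ioo a b, H (lam μ) * V (lam μ) * Real.cos μ = m := by
  have hHV : ∀ x, HasDerivAt (fun y => H y * V y) (-(K x * H x)) x := fun x => by
    rw [← heq]
    exact ((hH x).hasDerivAt.mul (hV x).hasDerivAt).congr_deriv (by ring)
  refine exists_eq_const_on_Ioo_of_hasDerivAt_zero fun μ hμ =>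
    hasDerivAt_mul_cos_of_hasDerivAt_tan_mul ?_ (hcos μ hμ)
  have hcomp := (hHV (lam μ)).comp μ (hlam μ hμ)
  rw [hK μ hμ] at hcomp
  exact hcomp.congr_deriv (by ring)
end

section
/- Let v(t,y) = (V(λ)+tλ)/√(t²+1), k(t,y) = (K+t)/(t²+1), K = −tan μ, λ = y/√(t²+1), and let μ = μ(t,y) be defined along characteristics by dλ/dμ = V(λ). Then the function U(t,y) = g(μ − arctan t)/(cos μ √(t²+1)) satisfies the transport equation U_t + v U_y + U k = 0 for every differentiable function g. -/
/-- With `λ(t,y) = y/√(t²+1)`, `μ = M(λ)` where `M' = 1/V` (the change of variables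
`dλ/dμ = V(λ)`), `v = (V(λ)+tλ)/√(t²+1)`, `K = −tan μ`, `k = (K+t)/(t²+1)`, the function
`U(t,y) = g(μ − arctan t)/(cos μ · √(t²+1))` satisfies the transport equation
`U_t + v U_y + k U = 0` wherever `cos μ ≠ 0` and `V(λ) ≠ 0`, for any differentiable `g`. -/
theorem stmt19 (V g M : ℝ → ℝ)
    (hV : Differentiable ℝ V) (hg : Differentiable ℝ g)
    (hM : ∀ l : ℝ, HasDerivAt M (1 / V l) l) :
    ∀ t y : ℝ,
      Real.cos (M (y / Real.sqrt (t ^ 2 + 1))) ≠ 0 →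
      V (y / Real.sqrt (t ^ 2 + 1)) ≠ 0 →
      deriv (fun s => g (M (y / Real.sqrt (s ^ 2 + 1)) - Real.arctan s) /
          (Real.cos (M (y / Real.sqrt (s ^ 2 + 1))) * Real.sqrt (s ^ 2 + 1))) t
        + (V (y / Real.sqrt (t ^ 2 + 1)) + t * (y / Real.sqrt (t ^ 2 + 1))) /
            Real.sqrt (t ^ 2 + 1) *
          deriv (fun s => g (M (s / Real.sqrt (t ^ 2 + 1)) - Real.arctan t) /
            (Real.cos (M (s / Real.sqrt (t ^ 2 + 1))) * Real.sqrt (t ^ 2 + 1))) y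
        + (-Real.tan (M (y / Real.sqrt (t ^ 2 + 1))) + t) / (t ^ 2 + 1) *
          (g (M (y / Real.sqrt (t ^ 2 + 1)) - Real.arctan t) /
            (Real.cos (M (y / Real.sqrt (t ^ 2 + 1))) * Real.sqrt (t ^ 2 + 1))) = 0 := by
  intro t y hc hV0
  have hS2 : (0:ℝ) < t ^ 2 + 1 := by positivity
  have hS : 0 < Real.sqrt (t ^ 2 + 1) := Real.sqrt_pos.mpr hS2
  have hSsq : Real.sqrt (t ^ 2 + 1) ^ 2 = t ^ 2 + 1 := Real.sq_sqrt hS2.le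
  set S := Real.sqrt (t ^ 2 + 1) with hSdef
  set l := y / S with hl
  set μ := M l with hμ
  -- derivative of s ↦ √(s²+1) at t
  have hsqrt : HasDerivAt (fun s : ℝ => Real.sqrt (s ^ 2 + 1)) (t / S) t := by
    have h1 : HasDerivAt (fun s : ℝ => s ^ 2 + 1) (2 * t) t := by
      simpa using ((hasDerivAt_pow 2 t).add_const 1)
    have h2 := (Real.hasDerivAt_sqrt (by positivity : t ^ 2 + 1 ≠ 0)).comp t h1
    convert h2 using 1
    · rfl
    · rfl
    · rfl
    rw [← hSdef]
    field_simp
  -- derivative of s ↦ y/√(s²+1) at t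
  have hlt : HasDerivAt (fun s : ℝ => y / Real.sqrt (s ^ 2 + 1))
      (-(y * (t / S)) / S ^ 2) t := by
    have := (hasDerivAt_const t y).fun_div hsqrt hS.ne'
    simpa using this
  -- derivative of s ↦ M(y/√(s²+1)) at t
  have hMt : HasDerivAt (fun s : ℝ => M (y / Real.sqrt (s ^ 2 + 1)))
      (1 / V l * (-(y * (t / S)) / S ^ 2)) t := (hM l).comp t hlt
  -- argument
  have hargt : HasDerivAt (fun s : ℝ => M (y / Real.sqrt (s ^ 2 + 1)) - Real.arctan s)
      (1 / V l * (-(y * (t / S)) / S ^ 2) - 1 / (1 + t ^ 2)) t :=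
    hMt.sub (Real.hasDerivAt_arctan t)
  have hnumt : HasDerivAt (fun s : ℝ => g (M (y / Real.sqrt (s ^ 2 + 1)) - Real.arctan s))
      (deriv g (μ - Real.arctan t) * (1 / V l * (-(y * (t / S)) / S ^ 2) - 1 / (1 + t ^ 2))) t :=
    ((hg _).hasDerivAt).comp t hargt
  have hcost : HasDerivAt (fun s : ℝ => Real.cos (M (y / Real.sqrt (s ^ 2 + 1))))
      (-Real.sin μ * (1 / V l * (-(y * (t / S)) / S ^ 2))) t :=
    hMt.cos
  have hdent : HasDerivAt (fun s : ℝ => Real.cos (M (y / Real.sqrt (s ^ 2 + 1))) * Real.sqrt (s ^ 2 + 1))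
      (-Real.sin μ * (1 / V l * (-(y * (t / S)) / S ^ 2)) * S + Real.cos μ * (t / S)) t :=
    hcost.mul hsqrt
  have hden_ne : Real.cos μ * S ≠ 0 := mul_ne_zero hc hS.ne'
  have hUt := (hnumt.fun_div hdent hden_ne)
  -- y-derivative
  have hly : HasDerivAt (fun s : ℝ => s / S) (1 / S) y := by
    simpa using (hasDerivAt_id y).div_const S
  have hMy : HasDerivAt (fun s : ℝ => M (s / S)) (1 / V l * (1 / S)) y := (hM l).comp y hly
  have hargy : HasDerivAt (fun s : ℝ => M (s / S) - Real.arctan t) (1 / V l * (1 / S)) y := by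
    simpa using hMy.sub_const (Real.arctan t)
  have hnumy : HasDerivAt (fun s : ℝ => g (M (s / S) - Real.arctan t))
      (deriv g (μ - Real.arctan t) * (1 / V l * (1 / S))) y :=
    ((hg _).hasDerivAt).comp y hargy
  have hdeny : HasDerivAt (fun s : ℝ => Real.cos (M (s / S)) * S)
      (-Real.sin μ * (1 / V l * (1 / S)) * S) y := by
    simpa using (((Real.hasDerivAt_cos μ).comp y hMy).mul_const S)
  have hUy := hnumy.fun_div hdeny hden_ne
  rw [← hSdef, ← hl, ← hμ] at hUt
  rw [← hl, ← hμ] at hUy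
  rw [hUt.deriv, hUy.deriv, Real.tan_eq_sin_div_cos]
  rw [show (t : ℝ) ^ 2 + 1 = S ^ 2 from hSsq.symm, hl]
  have h1t : (1 : ℝ) + t ^ 2 = S ^ 2 := by rw [hSsq]; ring
  rw [h1t]
  have hV2 : V (y / S) ≠ 0 := hV0
  field_simp
  ring
end
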